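/- Let G = {(g_i, 𝔤_i) : 1 ≤ i ≤ l} be a pseudo-Gröbner basis of an ideal I ⊆ R[x]. For a saturated subset J ⊆ {1,...,l} set x_J = lcm(LM(g_i) : i ∈ J), 𝔠_J = Σ_{i∈J} 𝔤_i LC(g_i), choose a_i ∈ 𝔠_J⁻¹𝔤_i with 1 = Σ_{i∈J} a_i LC(g_i), and set f_J = Σ_{i∈J} a_i (x_J / LM(g_i)) g_i. Then { (f_J, 𝔠_J) : J saturated } is a strong pseudo-Gröbner basis of I. -/

import Mathlib

open MvPolynomial

attribute [local instance] MvPolynomial.algebraMvPolynomial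

noncomputable def mdeg {σ : Type*} (m : MonomialOrder σ) {K : Type*} [CommSemiring K]
    (f : MvPolynomial σ K) : σ →₀ ℕ :=
  m.toSyn.symm (f.support.sup fun d => m.toSyn d)

noncomputable def plc {σ : Type*} (m : MonomialOrder σ) {K : Type*} [CommSemiring K]
    (f : MvPolynomial σ K) : K :=
  f.coeff (mdeg m f)

/-- The least common multiple `x_J` of the leading monomials `LM(gᵢ)`, `i ∈ J`. -/
noncomputable def xJ {n l : ℕ} {K : Type*} [Field K] (m : MonomialOrder (Fin n))
    (g : Fin l → MvPolynomial (Fin n) K) (J : Finset (Fin l)) : Fin n →₀ ℕ :=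
  J.sup fun i => mdeg m (g i)

/-- `J` is saturated: if `LM(gᵢ)` divides `x_J` then `i ∈ J`. -/
def Saturated {n l : ℕ} {K : Type*} [Field K] (m : MonomialOrder (Fin n))
    (g : Fin l → MvPolynomial (Fin n) K) (J : Finset (Fin l)) : Prop :=
  ∀ i, (∃ γ, xJ m g J = mdeg m (g i) + γ) → i ∈ J

/-- The coefficient ideal `𝔠_J = ∑_{i ∈ J} 𝔤ᵢ·LC(gᵢ)`. -/
noncomputable def cJ {R : Type*} [CommRing R] [IsDomain R] [IsDedekindDomain R]
    {n l : ℕ} (m : MonomialOrder (Fin n))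
    (g : Fin l → MvPolynomial (Fin n) (FractionRing R))
    (𝔤 : Fin l → FractionalIdeal (nonZeroDivisors R) (FractionRing R))
    (J : Finset (Fin l)) : FractionalIdeal (nonZeroDivisors R) (FractionRing R) :=
  ∑ i ∈ J, 𝔤 i * FractionalIdeal.spanSingleton (nonZeroDivisors R) (plc m (g i))

/-- The polynomial `f_J = ∑_{i ∈ J} aᵢ (x_J / LM(gᵢ)) gᵢ`. -/
noncomputable def fJ {n l : ℕ} {K : Type*} [Field K] (m : MonomialOrder (Fin n))
    (g : Fin l → MvPolynomial (Fin n) K) (a : Fin l → K) (J : Finset (Fin l)) :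
    MvPolynomial (Fin n) K :=
  ∑ i ∈ J, monomial (xJ m g J - mdeg m (g i)) (a i) * g i

/-!
Put `J = {i | LM(gᵢ) ∣ LM(f)}`. This set is saturated and `x_J ∣ LM(f)`. Since `G` is a
pseudo-Gröbner basis, the leading terms `c·LC(f)·LM(f)`, `c ∈ 𝔣`, lie in the `R[x]`-span of the
terms `𝔤ᵢ·LC(gᵢ)·LM(gᵢ)`; comparing coefficients of `LM(f)` gives `𝔣·LC(f) ⊆ 𝔠_J`. On the other
hand `∑ aᵢ LC(gᵢ) = 1` makes `f_J` a polynomial with leading monomial `x_J` and leading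
coefficient `1`. Finally `(f_J, 𝔠_J)` lies in `I` because `𝔠_J aᵢ ⊆ 𝔠_J 𝔠_J⁻¹ 𝔤ᵢ ⊆ 𝔤ᵢ`.
-/

section LeadingTerm

variable {σ : Type*} (m : MonomialOrder σ) {K : Type*}

theorem mdeg_eq_degree [CommSemiring K] (f : MvPolynomial σ K) : mdeg m f = m.degree f := rfl

theorem plc_eq_leadingCoeff [CommSemiring K] (f : MvPolynomial σ K) :
    plc m f = m.leadingCoeff f := rfl

theorem mdeg_C_mul [CommRing K] [IsDomain K] {c : K} (hc : c ≠ 0) (f : MvPolynomial σ K) :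
    mdeg m (C c * f) = mdeg m f := by
  rw [mdeg_eq_degree, ← smul_eq_C_mul, m.degree_smul_of_isRegular (IsRegular.of_ne_zero hc)]
  rfl

theorem plc_C_mul [CommRing K] [IsDomain K] (c : K) (f : MvPolynomial σ K) :
    plc m (C c * f) = c * plc m f := by
  simp only [plc_eq_leadingCoeff, m.leadingCoeff_mul, m.leadingCoeff_C]

end LeadingTerm

section SaturatedSets

variable {n l : ℕ} {K : Type*} [Field K] (m : MonomialOrder (Fin n))
  (g : Fin l → MvPolynomial (Fin n) K)

theorem mdeg_le_xJ {J : Finset (Fin l)} {i : Fin l} (hi : i ∈ J) : mdeg m (g i) ≤ xJ m g J :=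
  Finset.le_sup (f := fun i => mdeg m (g i)) hi

theorem xJ_filter_le (d : Fin n →₀ ℕ) :
    xJ m g (Finset.univ.filter fun i => mdeg m (g i) ≤ d) ≤ d :=
  Finset.sup_le fun _ hi => (Finset.mem_filter.mp hi).2

theorem saturated_filter (d : Fin n →₀ ℕ) :
    Saturated m g (Finset.univ.filter fun i => mdeg m (g i) ≤ d) := by
  rintro i ⟨γ, hγ⟩
  exact Finset.mem_filter.mpr
    ⟨Finset.mem_univ i, (le_iff_exists_add.mpr ⟨γ, hγ⟩).trans (xJ_filter_le m g d)⟩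

variable (a : Fin l → K) (J : Finset (Fin l))

theorem coeff_xJ_fJ : (fJ m g a J).coeff (xJ m g J) = ∑ i ∈ J, a i * plc m (g i) := by
  rw [fJ, coeff_sum]
  refine Finset.sum_congr rfl fun i hi => ?_
  rw [coeff_monomial_mul', if_pos tsub_le_self, tsub_tsub_cancel_of_le (mdeg_le_xJ m g hi)]
  rfl

theorem toSyn_degree_fJ_le : m.toSyn (m.degree (fJ m g a J)) ≤ m.toSyn (xJ m g J) := by
  refine m.degree_sum_le.trans (Finset.sup_le fun i hi => ?_)
  calc m.toSyn (m.degree (monomial (xJ m g J - mdeg m (g i)) (a i) * g i))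
      ≤ m.toSyn (m.degree (monomial (xJ m g J - mdeg m (g i)) (a i))) +
          m.toSyn (m.degree (g i)) := by rw [← map_add]; exact m.degree_mul_le
    _ ≤ m.toSyn (xJ m g J - mdeg m (g i)) + m.toSyn (mdeg m (g i)) :=
        add_le_add (m.degree_monomial_le _) le_rfl
    _ = m.toSyn (xJ m g J) := by rw [← map_add, tsub_add_cancel_of_le (mdeg_le_xJ m g hi)]

variable {a J}

theorem mdeg_fJ (h : ∑ i ∈ J, a i * plc m (g i) = 1) : mdeg m (fJ m g a J) = xJ m g J := by
  refine m.toSyn.injective (le_antisymm (toSyn_degree_fJ_le m g a J) (m.le_degree ?_))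
  rw [mem_support_iff, coeff_xJ_fJ, h]
  exact one_ne_zero

theorem plc_fJ (h : ∑ i ∈ J, a i * plc m (g i) = 1) : plc m (fJ m g a J) = 1 := by
  rw [plc, mdeg_fJ m g h, coeff_xJ_fJ, h]

theorem C_mul_fJ_mem (N : Ideal (MvPolynomial (Fin n) K)) {c : K}
    (h : ∀ i ∈ J, C (c * a i) * g i ∈ N) : C c * fJ m g a J ∈ N := by
  rw [fJ, Finset.mul_sum]
  refine N.sum_mem fun i hi => ?_
  have hmon : monomial (xJ m g J - mdeg m (g i)) (a i) =
      C (a i) * monomial (xJ m g J - mdeg m (g i)) 1 := by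
    rw [C_mul_monomial, mul_one]
  have hfactor : C c * (monomial (xJ m g J - mdeg m (g i)) (a i) * g i) =
      monomial (xJ m g J - mdeg m (g i)) 1 * (C (c * a i) * g i) := by
    rw [hmon, map_mul]
    ring
  rw [hfactor]
  exact N.mul_mem_left _ (h i hi)

end SaturatedSets

open scoped nonZeroDivisors in
theorem FractionalIdeal.mul_mem_of_mem_inv_mul {R K : Type*} [CommRing R] [IsDomain R] [Field K]
    [Algebra R K] [IsFractionRing R K] {𝔠 𝔤 : FractionalIdeal R⁰ K} {c a : K} (hc : c ∈ 𝔠)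
    (ha : a ∈ 𝔠⁻¹ * 𝔤) : c * a ∈ 𝔤 := by
  have hle : 𝔠 * (𝔠⁻¹ * 𝔤) ≤ 𝔤 := by
    rw [← mul_assoc]
    calc 𝔠 * 𝔠⁻¹ * 𝔤 ≤ 1 * 𝔤 := by gcongr; exact FractionalIdeal.mul_one_div_le_one
      _ = 𝔤 := one_mul 𝔤
  exact hle (FractionalIdeal.mul_mem_mul hc ha)

theorem coeff_mem_iSup_of_mem_span_monomial {σ ι R K : Type*} [CommSemiring R] [CommSemiring K]
    [Algebra R K] {M : ι → Submodule R K} {d : ι → σ →₀ ℕ} {x : MvPolynomial σ K}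
    (hx : x ∈ Submodule.span (MvPolynomial σ R) (⋃ i, monomial (d i) '' (M i : Set K)))
    (e : σ →₀ ℕ) : x.coeff e ∈ ⨆ (i) (_ : d i ≤ e), M i := by
  induction hx using Submodule.span_induction generalizing e with
  | mem x hx =>
    obtain ⟨i, y, hy, rfl⟩ := Set.mem_iUnion.mp hx
    classical
    rw [coeff_monomial]
    split_ifs with h
    · exact Submodule.mem_iSup_of_mem i (Submodule.mem_iSup_of_mem h.le hy)
    · exact zero_mem _
  | zero => simp
  | add x y _ _ hx hy => rw [coeff_add]; exact add_mem (hx e) (hy e)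
  | smul p x _ hx =>
    classical
    rw [Algebra.smul_def, algebraMap_def, coeff_mul]
    refine Submodule.sum_mem _ fun uv huv => ?_
    rw [coeff_map, ← Algebra.smul_def]
    have hmono : (⨆ (i) (_ : d i ≤ uv.2), M i) ≤ ⨆ (i) (_ : d i ≤ e), M i :=
      biSup_mono fun _ h => h.trans (Finset.HasAntidiagonal.mem_antidiagonal.mp huv ▸ le_add_self)
    exact Submodule.smul_mem _ _ (hmono (hx uv.2))

theorem mem_cJ_filter_of_monomial_mem_span {R : Type*} [CommRing R] [IsDedekindDomain R]
    {n l : ℕ} (m : MonomialOrder (Fin n))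
    {g : Fin l → MvPolynomial (Fin n) (FractionRing R)}
    {𝔤 : Fin l → FractionalIdeal (nonZeroDivisors R) (FractionRing R)}
    {e : Fin n →₀ ℕ} {y : FractionRing R}
    (h : monomial e y ∈ Submodule.span (MvPolynomial (Fin n) R)
        (⋃ i, {x : MvPolynomial (Fin n) (FractionRing R) |
          ∃ c ∈ 𝔤 i, x = C c * monomial (mdeg m (g i)) (plc m (g i))})) :
    y ∈ cJ m g 𝔤 (Finset.univ.filter fun i => mdeg m (g i) ≤ e) := by
  let F := fun i => 𝔤 i * FractionalIdeal.spanSingleton (nonZeroDivisors R) (plc m (g i))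
  have hsub : (⋃ i, {x : MvPolynomial (Fin n) (FractionRing R) |
      ∃ c ∈ 𝔤 i, x = C c * monomial (mdeg m (g i)) (plc m (g i))}) ⊆
      ⋃ i, monomial (mdeg m (g i)) ''
        ((F i : Submodule R (FractionRing R)) : Set (FractionRing R)) := by
    refine Set.iUnion_mono fun i => ?_
    rintro _ ⟨c, hc, rfl⟩
    exact ⟨c * plc m (g i), FractionalIdeal.mul_mem_mul hc
      (FractionalIdeal.mem_spanSingleton_self _ _), by rw [C_mul_monomial]⟩
  have hcoeff := coeff_mem_iSup_of_mem_span_monomial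
    (M := fun i => (F i : Submodule R (FractionRing R))) (Submodule.span_mono hsub h) e
  rw [coeff_monomial, if_pos rfl] at hcoeff
  rw [← FractionalIdeal.mem_coe]
  refine (iSup₂_le fun i hi => FractionalIdeal.coe_le_coe.mpr ?_) hcoeff
  exact Finset.single_le_sum (f := F) (fun _ _ => bot_le)
    (Finset.mem_filter.mpr ⟨Finset.mem_univ i, hi⟩)

theorem mul_spanSingleton_plc_le_cJ_filter {R : Type*} [CommRing R] [IsDedekindDomain R]
    {n l : ℕ} (m : MonomialOrder (Fin n))
    {g : Fin l → MvPolynomial (Fin n) (FractionRing R)}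
    {𝔤 : Fin l → FractionalIdeal (nonZeroDivisors R) (FractionRing R)}
    {N : Ideal (MvPolynomial (Fin n) (FractionRing R))}
    (hN : ∀ p ∈ N, monomial (mdeg m p) (plc m p) ∈ Submodule.span (MvPolynomial (Fin n) R)
        (⋃ i, {x : MvPolynomial (Fin n) (FractionRing R) |
          ∃ c ∈ 𝔤 i, x = C c * monomial (mdeg m (g i)) (plc m (g i))}))
    {f : MvPolynomial (Fin n) (FractionRing R)}
    {𝔣 : FractionalIdeal (nonZeroDivisors R) (FractionRing R)} (hf : ∀ c ∈ 𝔣, C c * f ∈ N) :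
    𝔣 * FractionalIdeal.spanSingleton _ (plc m f) ≤
      cJ m g 𝔤 (Finset.univ.filter fun i => mdeg m (g i) ≤ mdeg m f) := by
  rw [mul_comm, FractionalIdeal.spanSingleton_mul_le_iff]
  intro c hc
  by_cases hc0 : c = 0
  · rw [hc0, mul_zero]
    exact FractionalIdeal.zero_mem _
  apply mem_cJ_filter_of_monomial_mem_span
  rw [mul_comm, ← mdeg_C_mul m hc0, ← plc_C_mul]
  exact hN _ (hf c hc)

theorem stmt14_general {R : Type*} [CommRing R] [IsDedekindDomain R] {n l : ℕ}
    (m : MonomialOrder (Fin n))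
    (I : Ideal (MvPolynomial (Fin n) R))
    (g : Fin l → MvPolynomial (Fin n) (FractionRing R))
    (𝔤 : Fin l → FractionalIdeal (nonZeroDivisors R) (FractionRing R))
    (hGI : ∀ i, ∀ c ∈ 𝔤 i, C c * g i ∈
      I.map (Algebra.linearMap (MvPolynomial (Fin n) R) (MvPolynomial (Fin n) (FractionRing R))))
    (hGB : Submodule.span (MvPolynomial (Fin n) R)
        {x : MvPolynomial (Fin n) (FractionRing R) |
          ∃ p ∈ I.map (Algebra.linearMap (MvPolynomial (Fin n) R)
            (MvPolynomial (Fin n) (FractionRing R))),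
            x = monomial (mdeg m p) (plc m p)} =
      Submodule.span (MvPolynomial (Fin n) R)
        (⋃ i, {x : MvPolynomial (Fin n) (FractionRing R) |
          ∃ c ∈ 𝔤 i, x = C c * monomial (mdeg m (g i)) (plc m (g i))}))
    (a : Finset (Fin l) → Fin l → FractionRing R)
    (ha : ∀ J : Finset (Fin l), J.Nonempty → Saturated m g J →
      (∀ i ∈ J, a J i ∈ (cJ m g 𝔤 J)⁻¹ * 𝔤 i) ∧
      (1 : FractionRing R) = ∑ i ∈ J, a J i * plc m (g i)) :
    (∀ J : Finset (Fin l), J.Nonempty → Saturated m g J →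
      ∀ c ∈ cJ m g 𝔤 J, C c * fJ m g (a J) J ∈
        I.map (Algebra.linearMap (MvPolynomial (Fin n) R)
          (MvPolynomial (Fin n) (FractionRing R)))) ∧
    (∀ (f : MvPolynomial (Fin n) (FractionRing R))
      (𝔣 : FractionalIdeal (nonZeroDivisors R) (FractionRing R)),
      f ≠ 0 → 𝔣 ≠ 0 →
      (∀ c ∈ 𝔣, C c * f ∈
        I.map (Algebra.linearMap (MvPolynomial (Fin n) R)
          (MvPolynomial (Fin n) (FractionRing R)))) →
      ∃ J : Finset (Fin l), J.Nonempty ∧ Saturated m g J ∧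
        (∃ γ, mdeg m f = mdeg m (fJ m g (a J) J) + γ) ∧
        𝔣 * FractionalIdeal.spanSingleton (nonZeroDivisors R) (plc m f) ≤
          cJ m g 𝔤 J *
            FractionalIdeal.spanSingleton (nonZeroDivisors R) (plc m (fJ m g (a J) J))) := by
  set N := I.map (Algebra.linearMap (MvPolynomial (Fin n) R)
    (MvPolynomial (Fin n) (FractionRing R)))
  refine ⟨fun J hJ hsat c hc => C_mul_fJ_mem m g N fun i hi =>
    hGI i _ (FractionalIdeal.mul_mem_of_mem_inv_mul hc ((ha J hJ hsat).1 i hi)),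
    fun f 𝔣 hf h𝔣 hf𝔣 => ?_⟩
  set J := Finset.univ.filter fun i => mdeg m (g i) ≤ mdeg m f
  have hlc : 𝔣 * FractionalIdeal.spanSingleton _ (plc m f) ≤ cJ m g 𝔤 J :=
    mul_spanSingleton_plc_le_cJ_filter m (fun p hp => hGB ▸ Submodule.subset_span ⟨p, hp, rfl⟩)
      hf𝔣
  have hJ : J.Nonempty := by
    rw [Finset.nonempty_iff_ne_empty]
    intro hJ
    rw [hJ, cJ, Finset.sum_empty, FractionalIdeal.le_zero_iff, mul_eq_zero,
      FractionalIdeal.spanSingleton_eq_zero_iff] at hlc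
    exact hlc.elim h𝔣 (m.leadingCoeff_ne_zero_iff.mpr hf)
  obtain ⟨-, hsum⟩ := ha J hJ (saturated_filter m g _)
  refine ⟨J, hJ, saturated_filter m g _, ?_, ?_⟩
  · rw [mdeg_fJ m g hsum.symm]
    exact le_iff_exists_add.mp (xJ_filter_le m g _)
  · rwa [plc_fJ m g hsum.symm, FractionalIdeal.spanSingleton_one, mul_one]

/-- Let `G = {(gᵢ, 𝔤ᵢ)}` be a pseudo-Gröbner basis of an ideal
`I ⊆ R[x]`. For each saturated `J` choose `aᵢ ∈ 𝔠_J⁻¹𝔤ᵢ` with `1 = ∑_{i∈J} aᵢ LC(gᵢ)`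
and set `f_J = ∑_{i∈J} aᵢ (x_J / LM(gᵢ)) gᵢ`. Then `{(f_J, 𝔠_J) : J saturated}` is a
strong pseudo-Gröbner basis of `I`. -/
theorem stmt14 {R : Type*} [CommRing R] [IsDomain R] [IsDedekindDomain R] {n l : ℕ}
    (m : MonomialOrder (Fin n))
    (I : Ideal (MvPolynomial (Fin n) R))
    (g : Fin l → MvPolynomial (Fin n) (FractionRing R))
    (𝔤 : Fin l → FractionalIdeal (nonZeroDivisors R) (FractionRing R))
    (hg : ∀ i, g i ≠ 0) (h𝔤 : ∀ i, 𝔤 i ≠ 0)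
    (hpg : ∀ i, ∀ c ∈ 𝔤 i, ∀ d, c * (g i).coeff d ∈
      (1 : FractionalIdeal (nonZeroDivisors R) (FractionRing R)))
    (hGI : ∀ i, ∀ c ∈ 𝔤 i, C c * g i ∈
      I.map (Algebra.linearMap (MvPolynomial (Fin n) R) (MvPolynomial (Fin n) (FractionRing R))))
    (hGB : Submodule.span (MvPolynomial (Fin n) R)
        {x : MvPolynomial (Fin n) (FractionRing R) |
          ∃ p ∈ I.map (Algebra.linearMap (MvPolynomial (Fin n) R)
            (MvPolynomial (Fin n) (FractionRing R))),
            x = monomial (mdeg m p) (plc m p)} =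
      Submodule.span (MvPolynomial (Fin n) R)
        (⋃ i, {x : MvPolynomial (Fin n) (FractionRing R) |
          ∃ c ∈ 𝔤 i, x = C c * monomial (mdeg m (g i)) (plc m (g i))}))
    (a : Finset (Fin l) → Fin l → FractionRing R)
    (ha : ∀ J : Finset (Fin l), J.Nonempty → Saturated m g J →
      (∀ i ∈ J, a J i ∈ (cJ m g 𝔤 J)⁻¹ * 𝔤 i) ∧
      (1 : FractionRing R) = ∑ i ∈ J, a J i * plc m (g i)) :
    (∀ J : Finset (Fin l), J.Nonempty → Saturated m g J →
      ∀ c ∈ cJ m g 𝔤 J, C c * fJ m g (a J) J ∈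
        I.map (Algebra.linearMap (MvPolynomial (Fin n) R)
          (MvPolynomial (Fin n) (FractionRing R)))) ∧
    (∀ (f : MvPolynomial (Fin n) (FractionRing R))
      (𝔣 : FractionalIdeal (nonZeroDivisors R) (FractionRing R)),
      f ≠ 0 → 𝔣 ≠ 0 →
      (∀ c ∈ 𝔣, C c * f ∈
        I.map (Algebra.linearMap (MvPolynomial (Fin n) R)
          (MvPolynomial (Fin n) (FractionRing R)))) →
      ∃ J : Finset (Fin l), J.Nonempty ∧ Saturated m g J ∧
        (∃ γ, mdeg m f = mdeg m (fJ m g (a J) J) + γ) ∧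
        𝔣 * FractionalIdeal.spanSingleton (nonZeroDivisors R) (plc m f) ≤
          cJ m g 𝔤 J *
            FractionalIdeal.spanSingleton (nonZeroDivisors R) (plc m (fJ m g (a J) J))) :=
  stmt14_general m I g 𝔤 hGI hGB a ha
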